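/- (Optimal behavior policy) For every baseline function b, the behavior policy μ* lies in Λ, and for every time t, every state s, and every μ ∈ Λ, Var( G^b(τ^{μ*}_{t:T−1}) | S_t = s ) ≤ Var( G^b(τ^μ_{t:T−1}) | S_t = s ); moreover Var( G^b(τ^{μ*}_{t:T−1}) | S_t = s ) = ( Σ_a π_t(a|s)√(u_{π,t}(s,a)) )² − (v_{π,t}(s) − b̄_t(s))². -/
import Mathlib


open Finset

namespace DOpt

variable {S A : Type}

/-- A time-indexed policy: for each time step and state, a probability distribution on actions. -/
def IsPolicy [Fintype A] (μ : ℕ → S → A → ℝ) : Prop :=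
  ∀ t s, (∀ a, 0 ≤ μ t s a) ∧ ∑ a, μ t s a = 1

/-- A transition probability kernel on the finite state space. -/
def IsKernel [Fintype S] (p : S → A → S → ℝ) : Prop :=
  ∀ s a, (∀ s', 0 ≤ p s a s') ∧ ∑ s', p s a s' = 1

/-- Action value `q_{π,t}(s,a)` computed with `n` remaining transitions after time `t`
(`n = T - 1 - t` in a horizon-`T` MDP). -/
noncomputable def qval [Fintype S] [Fintype A] (p : S → A → S → ℝ) (π : ℕ → S → A → ℝ)
    (r : S → A → ℝ) : ℕ → ℕ → S → A → ℝ
  | 0, _, s, a => r s a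
  | n + 1, t, s, a =>
      r s a + ∑ s', p s a s' * ∑ a', π (t + 1) s' a' * qval p π r n (t + 1) s' a'

/-- `q_{π,t}(s,a)` in the horizon-`T` MDP. -/
noncomputable def qf [Fintype S] [Fintype A] (T : ℕ) (p : S → A → S → ℝ)
    (π : ℕ → S → A → ℝ) (r : S → A → ℝ) (t : ℕ) (s : S) (a : A) : ℝ :=
  qval p π r (T - 1 - t) t s a

/-- `v_{π,t}(s) = Σ_a π_t(a|s) q_{π,t}(s,a)`. -/
noncomputable def vf [Fintype S] [Fintype A] (T : ℕ) (p : S → A → S → ℝ)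
    (π : ℕ → S → A → ℝ) (r : S → A → ℝ) (t : ℕ) (s : S) : ℝ :=
  ∑ a, π t s a * qf T p π r t s a

/-- `ν_{π,t}(s,a) = Var_{s' ∼ p(·|s,a)}(v_{π,t+1}(s'))` for `t ≤ T-2`, and `0` at `t = T-1`. -/
noncomputable def nuf [Fintype S] [Fintype A] (T : ℕ) (p : S → A → S → ℝ)
    (π : ℕ → S → A → ℝ) (r : S → A → ℝ) (t : ℕ) (s : S) (a : A) : ℝ :=
  if t + 2 ≤ T then
    (∑ s', p s a s' * (vf T p π r (t + 1) s') ^ 2) -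
      (∑ s', p s a s' * vf T p π r (t + 1) s') ^ 2
  else 0

/-- Trajectories with `n` further transitions after the first action:
`(a_t, s_{t+1}, a_{t+1}, …, s_{t+n}, a_{t+n})`. -/
def Traj (S A : Type) : ℕ → Type
  | 0 => A
  | n + 1 => A × S × Traj S A n

/-- Expectation, over trajectories generated by the behavior policy `μ` starting at time `t`
in state `s` with `n` further transitions, of a function `f` of the trajectory. -/
noncomputable def Exp [Fintype S] [Fintype A] (p : S → A → S → ℝ) (μ : ℕ → S → A → ℝ) :
    (n : ℕ) → ℕ → S → (Traj S A n → ℝ) → ℝ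
  | 0, t, s, f => ∑ a, μ t s a * f a
  | n + 1, t, s, f =>
      ∑ a, μ t s a * ∑ s', p s a s' * Exp p μ n (t + 1) s' (fun τ => f (a, s', τ))

/-- Conditional variance of a function of the trajectory, given `S_t = s`. -/
noncomputable def Var [Fintype S] [Fintype A] (p : S → A → S → ℝ) (μ : ℕ → S → A → ℝ)
    (n : ℕ) (t : ℕ) (s : S) (f : Traj S A n → ℝ) : ℝ :=
  Exp p μ n t s (fun τ => (f τ) ^ 2) - (Exp p μ n t s f) ^ 2

/-- `b̄_t(s) = Σ_a π_t(a|s) b_t(s,a)`. -/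
noncomputable def bbar [Fintype A] (π : ℕ → S → A → ℝ) (b : ℕ → S → A → ℝ)
    (t : ℕ) (s : S) : ℝ :=
  ∑ a, π t s a * b t s a

/-- The per-decision importance-sampling estimator `G^b` with baseline `b`, target policy `π`
and behavior policy `μ`, as a function of the trajectory from time `t` (with `n` further
transitions, `n = T - 1 - t`). -/
noncomputable def Gest [Fintype S] [Fintype A] (π μ : ℕ → S → A → ℝ) (r : S → A → ℝ)
    (b : ℕ → S → A → ℝ) : (n : ℕ) → ℕ → S → Traj S A n → ℝ
  | 0, t, s, a => (π t s a / μ t s a) * (r s a - b t s a) + bbar π b t s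
  | n + 1, t, s, (a, s', τ) =>
      (π t s a / μ t s a) * (r s a + Gest π μ r b n (t + 1) s' τ - b t s a) + bbar π b t s

/-- Normalization of a weight vector into a probability distribution; the uniform distribution
when the total weight vanishes. -/
noncomputable def normPol [Fintype A] (w : A → ℝ) (a : A) : ℝ :=
  if (∑ a', w a') = 0 then ((Fintype.card A : ℝ))⁻¹ else w a / ∑ a', w a'

/-- `u_{π,t}(s,a)` (with baseline `b`), defined backwards in time together with the optimal
behavior policy `μ*`; the first argument is the number `n = T - 1 - t` of remaining
transitions after time `t`. -/
noncomputable def uAux [Fintype S] [Fintype A] (T : ℕ) (p : S → A → S → ℝ)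
    (π : ℕ → S → A → ℝ) (r : S → A → ℝ) (b : ℕ → S → A → ℝ) :
    ℕ → ℕ → S → A → ℝ
  | 0, t, s, a => (qf T p π r t s a - b t s a) ^ 2
  | n + 1, t, s, a =>
      (qf T p π r t s a - b t s a) ^ 2 + nuf T p π r t s a +
        ∑ s', p s a s' *
          Var p
            (fun t' s₁ a₁ => normPol (fun a₂ =>
              π t' s₁ a₂ * Real.sqrt (uAux T p π r b (n - (t' - (t + 1))) t' s₁ a₂)) a₁)
            n (t + 1) s'
            (Gest π
              (fun t' s₁ a₁ => normPol (fun a₂ =>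
                π t' s₁ a₂ * Real.sqrt (uAux T p π r b (n - (t' - (t + 1))) t' s₁ a₂)) a₁)
              r b n (t + 1) s')
  termination_by n => n
  decreasing_by all_goals omega

/-- `u_{π,t}(s,a)` in the horizon-`T` MDP, with baseline `b`. -/
noncomputable def uf [Fintype S] [Fintype A] (T : ℕ) (p : S → A → S → ℝ)
    (π : ℕ → S → A → ℝ) (r : S → A → ℝ) (b : ℕ → S → A → ℝ) (t : ℕ) (s : S) (a : A) : ℝ :=
  uAux T p π r b (T - 1 - t) t s a

/-- The optimal behavior policy `μ*_t(a|s) ∝ π_t(a|s) √(u_{π,t}(s,a))` tailored to the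
baseline `b` (uniform when all the weights vanish). -/
noncomputable def mustar [Fintype S] [Fintype A] (T : ℕ) (p : S → A → S → ℝ)
    (π : ℕ → S → A → ℝ) (r : S → A → ℝ) (b : ℕ → S → A → ℝ) (t : ℕ) (s : S) (a : A) : ℝ :=
  normPol (fun a' => π t s a' * Real.sqrt (uf T p π r b t s a')) a

/-- Conditional expectation `E[G^b(τ^μ_{t:T-1}) | S_t = s]`. -/
noncomputable def ExpG [Fintype S] [Fintype A] (T : ℕ) (p : S → A → S → ℝ)
    (π μ : ℕ → S → A → ℝ) (r : S → A → ℝ) (b : ℕ → S → A → ℝ) (t : ℕ) (s : S) : ℝ :=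
  Exp p μ (T - 1 - t) t s (Gest π μ r b (T - 1 - t) t s)

/-- Conditional variance `Var(G^b(τ^μ_{t:T-1}) | S_t = s)`. -/
noncomputable def VarG [Fintype S] [Fintype A] (T : ℕ) (p : S → A → S → ℝ)
    (π μ : ℕ → S → A → ℝ) (r : S → A → ℝ) (b : ℕ → S → A → ℝ) (t : ℕ) (s : S) : ℝ :=
  Var p μ (T - 1 - t) t s (Gest π μ r b (T - 1 - t) t s)

/-- Membership in the enlarged policy-search space
`Λ = {μ : ∀ t,s,a, μ_t(a|s) = 0 → π_t(a|s)·u_{π,t}(s,a) = 0}`. -/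
def inLambda [Fintype S] [Fintype A] (T : ℕ) (p : S → A → S → ℝ)
    (π : ℕ → S → A → ℝ) (r : S → A → ℝ) (b : ℕ → S → A → ℝ) (μ : ℕ → S → A → ℝ) : Prop :=
  ∀ t s a, t < T → μ t s a = 0 → π t s a * uf T p π r b t s a = 0


/-- The optimal baseline `b*_t(s,a) = q_{π,t}(s,a)`. -/
noncomputable def bstar [Fintype S] [Fintype A] (T : ℕ) (p : S → A → S → ℝ)
    (π : ℕ → S → A → ℝ) (r : S → A → ℝ) : ℕ → S → A → ℝ :=
  fun t s a => qf T p π r t s a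

/-- The zero baseline: with it, `Gest` is the plain PDIS estimator `G^{PDIS}`. -/
def zerob : ℕ → S → A → ℝ := fun _ _ _ => 0

section Helpers

variable {S A : Type} [Fintype S] [Fintype A]

lemma weighted_sq_avg_le {ι : Type} [Fintype ι] (w x : ι → ℝ) (hw : ∀ i, 0 ≤ w i)
    (hsum : ∑ i, w i = 1) : (∑ i, w i * x i) ^ 2 ≤ ∑ i, w i * (x i) ^ 2 := by
  have h := Finset.sum_mul_sq_le_sq_mul_sq Finset.univ (fun i => Real.sqrt (w i))
      (fun i => Real.sqrt (w i) * x i)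
  have h1 : ∀ i : ι, Real.sqrt (w i) * (Real.sqrt (w i) * x i) = w i * x i := by
    intro i; rw [← mul_assoc, Real.mul_self_sqrt (hw i)]
  have h2 : ∀ i : ι, Real.sqrt (w i) ^ 2 = w i := fun i => Real.sq_sqrt (hw i)
  have h3 : ∀ i : ι, (Real.sqrt (w i) * x i) ^ 2 = w i * x i ^ 2 := by
    intro i; rw [mul_pow, h2]
  simp only [h1, h2, h3, hsum, one_mul] at h
  exact h

lemma cs_is (μv πv u : A → ℝ) (hμ0 : ∀ a, 0 ≤ μv a) (hμ1 : ∑ a, μv a = 1)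
    (hu : ∀ a, 0 ≤ u a) (hz : ∀ a, μv a = 0 → πv a * Real.sqrt (u a) = 0) :
    (∑ a, πv a * Real.sqrt (u a)) ^ 2 ≤ ∑ a, μv a * ((πv a / μv a) ^ 2 * u a) := by
  set g : A → ℝ := fun a => if μv a = 0 then 0 else πv a * Real.sqrt (u a) / Real.sqrt (μv a)
    with hg
  have h1 : ∀ a, πv a * Real.sqrt (u a) = Real.sqrt (μv a) * g a := by
    intro a; by_cases h : μv a = 0
    · simp [hg, h, hz a h]
    · have hpos : 0 < μv a := lt_of_le_of_ne (hμ0 a) (Ne.symm h)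
      have : Real.sqrt (μv a) ≠ 0 := by positivity
      simp only [hg, if_neg h]
      field_simp
  have h2 : ∀ a, g a ^ 2 = μv a * ((πv a / μv a) ^ 2 * u a) := by
    intro a; by_cases h : μv a = 0
    · simp [hg, h]
    · have hpos : 0 < μv a := lt_of_le_of_ne (hμ0 a) (Ne.symm h)
      have hs : Real.sqrt (μv a) ≠ 0 := by positivity
      simp only [hg, if_neg h]
      rw [div_pow, mul_pow, Real.sq_sqrt (hu a), Real.sq_sqrt (le_of_lt hpos)]
      field_simp
  have h := Finset.sum_mul_sq_le_sq_mul_sq Finset.univ (fun a => Real.sqrt (μv a)) g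
  have h4 : ∀ a : A, Real.sqrt (μv a) ^ 2 = μv a := fun a => Real.sq_sqrt (hμ0 a)
  calc (∑ a, πv a * Real.sqrt (u a)) ^ 2
      = (∑ a, Real.sqrt (μv a) * g a) ^ 2 := by rw [Finset.sum_congr rfl fun a _ => h1 a]
    _ ≤ (∑ a, Real.sqrt (μv a) ^ 2) * ∑ a, g a ^ 2 := h
    _ = ∑ a, μv a * ((πv a / μv a) ^ 2 * u a) := by
        simp only [h4, hμ1, one_mul]
        exact Finset.sum_congr rfl fun a _ => h2 a

lemma sum_rho_eq (μv πv X : A → ℝ) (h : ∀ a, μv a = 0 → πv a * X a = 0) :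
    ∑ a, μv a * (πv a / μv a * X a) = ∑ a, πv a * X a := by
  refine Finset.sum_congr rfl fun a _ => ?_
  by_cases ha : μv a = 0
  · simp [ha, (h a ha)]
  · field_simp

end Helpers
section Helpers2

variable {S A : Type} [Fintype S] [Fintype A]

lemma normPol_weight_sum [Nonempty A] (πv u : A → ℝ) (hπv : ∀ a, 0 ≤ πv a)
    (hu : ∀ a, 0 ≤ u a) :
    ∑ a, normPol (fun a' => πv a' * Real.sqrt (u a')) a *
      ((πv a / normPol (fun a' => πv a' * Real.sqrt (u a')) a) ^ 2 * u a)
      = (∑ a, πv a * Real.sqrt (u a)) ^ 2 := by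
  set Z := ∑ a, πv a * Real.sqrt (u a) with hZ
  by_cases hZ0 : Z = 0
  · have hterm : ∀ a ∈ Finset.univ, πv a * Real.sqrt (u a) = 0 := by
      rw [← Finset.sum_eq_zero_iff_of_nonneg]
      · exact hZ0
      · intro a _; exact mul_nonneg (hπv a) (Real.sqrt_nonneg _)
    have hcard : ((Fintype.card A : ℝ)) ≠ 0 := by
      exact_mod_cast Fintype.card_ne_zero
    have : ∀ a : A, normPol (fun a' => πv a' * Real.sqrt (u a')) a
        = ((Fintype.card A : ℝ))⁻¹ := by
      intro a; rw [normPol, if_pos hZ0]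
    rw [hZ0]
    rw [Finset.sum_eq_zero]
    · ring
    intro a _
    rw [this a]
    have h2 : πv a ^ 2 * u a = (πv a * Real.sqrt (u a)) ^ 2 := by
      rw [mul_pow, Real.sq_sqrt (hu a)]
    have h3 : πv a * Real.sqrt (u a) = 0 := hterm a (Finset.mem_univ a)
    have : (πv a / ((Fintype.card A : ℝ))⁻¹) ^ 2 * u a
        = (Fintype.card A : ℝ) ^ 2 * (πv a ^ 2 * u a) := by
      field_simp
    rw [this, h2, h3]
    ring
  · have hform : ∀ a : A, normPol (fun a' => πv a' * Real.sqrt (u a')) a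
        = πv a * Real.sqrt (u a) / Z := by
      intro a; rw [normPol, if_neg hZ0]
    have key : ∀ a : A, normPol (fun a' => πv a' * Real.sqrt (u a')) a *
        ((πv a / normPol (fun a' => πv a' * Real.sqrt (u a')) a) ^ 2 * u a)
        = Z * (πv a * Real.sqrt (u a)) := by
      intro a
      rw [hform a]
      by_cases hwa : πv a * Real.sqrt (u a) = 0
      · rw [hwa]; simp
      · have hπa : πv a ≠ 0 := fun h => hwa (by rw [h, zero_mul])
        have hsa : Real.sqrt (u a) ≠ 0 := fun h => hwa (by rw [h, mul_zero])
        have hua : u a ≠ 0 := by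
          intro h; exact hsa (by rw [h, Real.sqrt_zero])
        set c := Real.sqrt (u a) with hc
        have hsq : u a = c * c := (Real.mul_self_sqrt (hu a)).symm
        rw [hsq]
        field_simp
      
    rw [Finset.sum_congr rfl fun a _ => key a, ← Finset.mul_sum, ← hZ]
    ring

lemma mustar_policy {T : ℕ} {p : S → A → S → ℝ} {π : ℕ → S → A → ℝ} {r : S → A → ℝ}
    {b : ℕ → S → A → ℝ} [Nonempty A] (hπ : IsPolicy π) :
    IsPolicy (mustar T p π r b) := by
  intro t s
  have hw : ∀ a, 0 ≤ π t s a * Real.sqrt (uf T p π r b t s a) := fun a =>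
    mul_nonneg ((hπ t s).1 a) (Real.sqrt_nonneg _)
  constructor
  · intro a
    rw [mustar, normPol]
    split
    · positivity
    · exact div_nonneg (hw a) (Finset.sum_nonneg fun a' _ => hw a')
  · simp only [mustar, normPol]
    split
    · rw [Finset.sum_const, Finset.card_univ, nsmul_eq_mul]
      have hcard : ((Fintype.card A : ℝ)) ≠ 0 := by exact_mod_cast Fintype.card_ne_zero
      field_simp
    · rw [← Finset.sum_div, div_self (by assumption)]

lemma mustar_lambda {T : ℕ} {p : S → A → S → ℝ} {π : ℕ → S → A → ℝ} {r : S → A → ℝ}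
    {b : ℕ → S → A → ℝ} [Nonempty A] {t : ℕ} {s : S} {a : A}
    (hu : 0 ≤ uf T p π r b t s a) (h0 : mustar T p π r b t s a = 0) :
    π t s a * uf T p π r b t s a = 0 := by
  rw [mustar, normPol] at h0
  split at h0
  · exfalso
    have hcard : ((Fintype.card A : ℝ)) ≠ 0 := by exact_mod_cast Fintype.card_ne_zero
    exact (inv_ne_zero hcard) h0
  · have h1 : π t s a * Real.sqrt (uf T p π r b t s a) = 0 := by
      rcases div_eq_zero_iff.mp h0 with h | h
      · exact h
      · exact absurd h (by assumption)
    rcases mul_eq_zero.mp h1 with h | h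
    · rw [h, zero_mul]
    · have : uf T p π r b t s a = 0 :=
        le_antisymm (Real.sqrt_eq_zero'.mp h) hu
      rw [this, mul_zero]

lemma lam_sqrt {πa ua : ℝ} (hu : 0 ≤ ua) (h : πa * ua = 0) : πa * Real.sqrt ua = 0 := by
  rcases mul_eq_zero.mp h with h | h
  · rw [h, zero_mul]
  · rw [h, Real.sqrt_zero, mul_zero]

lemma lam_qb {πa ua x : ℝ} (hle : x ^ 2 ≤ ua) (h : πa * ua = 0) : πa * x = 0 := by
  rcases mul_eq_zero.mp h with h | h
  · rw [h, zero_mul]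
  · have : x ^ 2 = 0 := le_antisymm (h ▸ hle) (sq_nonneg x)
    rw [pow_eq_zero_iff (by norm_num)] at this
    rw [this, mul_zero]

end Helpers2
section ExpLemmas

variable {S A : Type} [Fintype S] [Fintype A]

lemma Exp_congr (p : S → A → S → ℝ) (μ μ' : ℕ → S → A → ℝ) :
    ∀ (n t : ℕ) (s : S) (f : Traj S A n → ℝ),
      (∀ t', t ≤ t' → t' ≤ t + n → ∀ s₁ a₁, μ t' s₁ a₁ = μ' t' s₁ a₁) →
      Exp p μ n t s f = Exp p μ' n t s f := by
  intro n
  induction n with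
  | zero =>
    intro t s f h
    simp only [Exp]
    exact Finset.sum_congr rfl fun a _ => by rw [h t le_rfl (by omega) s a]
  | succ n ih =>
    intro t s f h
    simp only [Exp]
    refine Finset.sum_congr rfl fun a _ => ?_
    rw [h t le_rfl (by omega) s a]
    congr 1
    refine Finset.sum_congr rfl fun s' _ => ?_
    rw [ih (t + 1) s' _ (fun t' h1 h2 s₁ a₁ => h t' (by omega) (by omega) s₁ a₁)]

lemma Gest_congr (π : ℕ → S → A → ℝ) (μ μ' : ℕ → S → A → ℝ) (r : S → A → ℝ)
    (b : ℕ → S → A → ℝ) :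
    ∀ (n t : ℕ) (s : S) (τ : Traj S A n),
      (∀ t', t ≤ t' → t' ≤ t + n → ∀ s₁ a₁, μ t' s₁ a₁ = μ' t' s₁ a₁) →
      Gest π μ r b n t s τ = Gest π μ' r b n t s τ := by
  intro n
  induction n with
  | zero =>
    intro t s τ h
    simp only [Gest]
    rw [h t le_rfl (by omega) s τ]
  | succ n ih =>
    intro t s τ h
    obtain ⟨a, s', τ'⟩ := τ
    simp only [Gest]
    rw [h t le_rfl (by omega) s a,
      ih (t + 1) s' τ' (fun t' h1 h2 s₁ a₁ => h t' (by omega) (by omega) s₁ a₁)]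

lemma Exp_add (p : S → A → S → ℝ) (μ : ℕ → S → A → ℝ) :
    ∀ (n t : ℕ) (s : S) (f g : Traj S A n → ℝ),
      Exp p μ n t s (fun τ => f τ + g τ) = Exp p μ n t s f + Exp p μ n t s g := by
  intro n
  induction n with
  | zero =>
    intro t s f g
    simp only [Exp, mul_add, Finset.sum_add_distrib]
  | succ n ih =>
    intro t s f g
    simp only [Exp]
    have : ∀ a s', Exp p μ n (t + 1) s' (fun τ => f (a, s', τ) + g (a, s', τ))
        = Exp p μ n (t + 1) s' (fun τ => f (a, s', τ))
          + Exp p μ n (t + 1) s' (fun τ => g (a, s', τ)) := fun a s' => ih (t + 1) s' _ _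
    simp only [this, mul_add, Finset.sum_add_distrib]

lemma Exp_smul (p : S → A → S → ℝ) (μ : ℕ → S → A → ℝ) :
    ∀ (n t : ℕ) (s : S) (c : ℝ) (f : Traj S A n → ℝ),
      Exp p μ n t s (fun τ => c * f τ) = c * Exp p μ n t s f := by
  intro n
  induction n with
  | zero =>
    intro t s c f
    simp only [Exp, Finset.mul_sum]
    exact Finset.sum_congr rfl fun a _ => by ring
  | succ n ih =>
    intro t s c f
    simp only [Exp]
    have : ∀ a s', Exp p μ n (t + 1) s' (fun τ => c * f (a, s', τ))
        = c * Exp p μ n (t + 1) s' (fun τ => f (a, s', τ)) := fun a s' => ih (t + 1) s' c _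
    simp only [this, Finset.mul_sum]
    exact Finset.sum_congr rfl fun a _ => Finset.sum_congr rfl fun s' _ => by ring

lemma Exp_const (p : S → A → S → ℝ) (μ : ℕ → S → A → ℝ) (hp : IsKernel p)
    (hμ : IsPolicy μ) :
    ∀ (n t : ℕ) (s : S) (c : ℝ), Exp p μ n t s (fun _ => c) = c := by
  intro n
  induction n with
  | zero =>
    intro t s c
    simp only [Exp]
    rw [← Finset.sum_mul, (hμ t s).2, one_mul]
  | succ n ih =>
    intro t s c
    simp only [Exp]
    have h1 : ∀ a : A, ∑ s', p s a s' * Exp p μ n (t + 1) s' (fun _ : Traj S A n => c) = c := by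
      intro a
      have h2 : ∀ s', Exp p μ n (t + 1) s' (fun _ : Traj S A n => c) = c :=
        fun s' => ih (t + 1) s' c
      simp only [h2]
      rw [← Finset.sum_mul, (hp s a).2, one_mul]
    simp only [h1]
    rw [← Finset.sum_mul, (hμ t s).2, one_mul]

lemma Exp_affine (p : S → A → S → ℝ) (μ : ℕ → S → A → ℝ) (hp : IsKernel p)
    (hμ : IsPolicy μ) (n t : ℕ) (s : S) (c d : ℝ) (f : Traj S A n → ℝ) :
    Exp p μ n t s (fun τ => c * f τ + d) = c * Exp p μ n t s f + d := by
  rw [Exp_add p μ n t s (fun τ => c * f τ) (fun _ => d), Exp_smul, Exp_const p μ hp hμ]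

lemma Exp_quad (p : S → A → S → ℝ) (μ : ℕ → S → A → ℝ) (hp : IsKernel p)
    (hμ : IsPolicy μ) (n t : ℕ) (s : S) (c2 c1 c0 : ℝ) (f : Traj S A n → ℝ) :
    Exp p μ n t s (fun τ => c2 * f τ ^ 2 + (c1 * f τ + c0))
      = c2 * Exp p μ n t s (fun τ => f τ ^ 2) + (c1 * Exp p μ n t s f + c0) := by
  rw [Exp_add p μ n t s (fun τ => c2 * f τ ^ 2) (fun τ => c1 * f τ + c0),
    Exp_smul p μ n t s c2 (fun τ => f τ ^ 2), Exp_affine p μ hp hμ]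

end ExpLemmas
section Unfold

variable {S A : Type} [Fintype S] [Fintype A]
variable {T : ℕ} {p : S → A → S → ℝ} {π : ℕ → S → A → ℝ} {r : S → A → ℝ}
  {b : ℕ → S → A → ℝ}

lemma qf_last {t : ℕ} (ht : t + 1 = T) (s : S) (a : A) : qf T p π r t s a = r s a := by
  have h : T - 1 - t = 0 := by omega
  rw [qf, h, qval]

lemma qf_succ {n t : ℕ} (ht : t + n + 2 = T) (s : S) (a : A) :
    qf T p π r t s a = r s a + ∑ s', p s a s' * vf T p π r (t + 1) s' := by
  have h1 : T - 1 - t = n + 1 := by omega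
  have h2 : T - 1 - (t + 1) = n := by omega
  rw [qf, h1, qval]
  congr 1
  refine Finset.sum_congr rfl fun s' _ => ?_
  congr 1
  rw [vf]
  refine Finset.sum_congr rfl fun a' _ => ?_
  rw [qf, h2]

lemma uf_last {t : ℕ} (ht : t + 1 = T) (s : S) (a : A) :
    uf T p π r b t s a = (qf T p π r t s a - b t s a) ^ 2 := by
  have h : T - 1 - t = 0 := by omega
  rw [uf, h, uAux]

lemma nuf_eq {n t : ℕ} (ht : t + n + 2 = T) (s : S) (a : A) :
    nuf T p π r t s a = (∑ s', p s a s' * (vf T p π r (t + 1) s') ^ 2) -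
      (∑ s', p s a s' * vf T p π r (t + 1) s') ^ 2 := by
  rw [nuf, if_pos (by omega)]

lemma nuf_nonneg (hp : IsKernel p) (t : ℕ) (s : S) (a : A) : 0 ≤ nuf T p π r t s a := by
  rw [nuf]
  split
  · have := weighted_sq_avg_le (fun s' => p s a s') (fun s' => vf T p π r (t + 1) s')
      (hp s a).1 (hp s a).2
    linarith
  · exact le_refl 0

lemma uf_succ [Nonempty A] {n t : ℕ} (ht : t + n + 2 = T) (s : S) (a : A) :
    uf T p π r b t s a = (qf T p π r t s a - b t s a) ^ 2 + nuf T p π r t s a +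
      ∑ s', p s a s' * Var p (mustar T p π r b) n (t + 1) s'
        (Gest π (mustar T p π r b) r b n (t + 1) s') := by
  have h1 : T - 1 - t = n + 1 := by omega
  rw [uf, h1, uAux]
  congr 1
  refine Finset.sum_congr rfl fun s' _ => ?_
  congr 1
  have hagree : ∀ t', t + 1 ≤ t' → t' ≤ t + 1 + n → ∀ (s₁ : S) (a₁ : A),
      (fun t' s₁ a₁ => normPol (fun a₂ =>
        π t' s₁ a₂ * Real.sqrt (uAux T p π r b (n - (t' - (t + 1))) t' s₁ a₂)) a₁) t' s₁ a₁
      = mustar T p π r b t' s₁ a₁ := by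
    intro t' h1' h2' s₁ a₁
    show normPol (fun a₂ =>
        π t' s₁ a₂ * Real.sqrt (uAux T p π r b (n - (t' - (t + 1))) t' s₁ a₂)) a₁
      = mustar T p π r b t' s₁ a₁
    have h3 : n - (t' - (t + 1)) = T - 1 - t' := by omega
    rw [h3]
    rfl
  have hG : Gest π (fun t' s₁ a₁ => normPol (fun a₂ =>
        π t' s₁ a₂ * Real.sqrt (uAux T p π r b (n - (t' - (t + 1))) t' s₁ a₂)) a₁)
        r b n (t + 1) s'
      = Gest π (mustar T p π r b) r b n (t + 1) s' :=
    funext fun τ => Gest_congr π _ _ r b n (t + 1) s' τ hagree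
  rw [Var, Var, hG,
    Exp_congr p _ (mustar T p π r b) n (t + 1) s' _ hagree,
    Exp_congr p _ (mustar T p π r b) n (t + 1) s' _ hagree]

lemma vf_sub_bbar {t : ℕ} (s : S) :
    vf T p π r t s - bbar π b t s = ∑ a, π t s a * (qf T p π r t s a - b t s a) := by
  rw [vf, bbar, ← Finset.sum_sub_distrib]
  exact Finset.sum_congr rfl fun a _ => by ring

lemma vb_sq_le_Z_sq {t : ℕ} (s : S) (hπ : IsPolicy π)
    (hA : ∀ a, (qf T p π r t s a - b t s a) ^ 2 ≤ uf T p π r b t s a) :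
    (vf T p π r t s - bbar π b t s) ^ 2
      ≤ (∑ a, π t s a * Real.sqrt (uf T p π r b t s a)) ^ 2 := by
  have habs : |vf T p π r t s - bbar π b t s|
      ≤ ∑ a, π t s a * Real.sqrt (uf T p π r b t s a) := by
    rw [vf_sub_bbar]
    refine le_trans (Finset.abs_sum_le_sum_abs _ _) ?_
    refine Finset.sum_le_sum fun a _ => ?_
    rw [abs_mul, abs_of_nonneg ((hπ t s).1 a)]
    refine mul_le_mul_of_nonneg_left ?_ ((hπ t s).1 a)
    calc |qf T p π r t s a - b t s a|
        = Real.sqrt ((qf T p π r t s a - b t s a) ^ 2) := (Real.sqrt_sq_eq_abs _).symm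
      _ ≤ Real.sqrt (uf T p π r b t s a) := Real.sqrt_le_sqrt (hA a)
  calc (vf T p π r t s - bbar π b t s) ^ 2 = |vf T p π r t s - bbar π b t s| ^ 2 := by
        rw [sq_abs]
    _ ≤ (∑ a, π t s a * Real.sqrt (uf T p π r b t s a)) ^ 2 := by
        refine pow_le_pow_left₀ (abs_nonneg _) habs 2

end Unfold
section StepLemmas

variable {S A : Type} [Fintype S] [Fintype A]

lemma sum_weight_affine {ι : Type} [Fintype ι] (w f : ι → ℝ) (hw : ∑ i, w i = 1) (c d : ℝ) :
    ∑ i, w i * (c * f i + d) = c * (∑ i, w i * f i) + d := by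
  have h : ∀ i, w i * (c * f i + d) = c * (w i * f i) + w i * d := fun i => by ring
  rw [Finset.sum_congr rfl fun i _ => h i, Finset.sum_add_distrib, ← Finset.mul_sum,
    ← Finset.sum_mul, hw, one_mul]

lemma sum_weight_quad {ι : Type} [Fintype ι] (w f g : ι → ℝ) (hw : ∑ i, w i = 1)
    (c2 c1 c0 : ℝ) :
    ∑ i, w i * (c2 * g i + (c1 * f i + c0))
      = c2 * (∑ i, w i * g i) + (c1 * (∑ i, w i * f i) + c0) := by
  have h : ∀ i, w i * (c2 * g i + (c1 * f i + c0))
      = c2 * (w i * g i) + (c1 * (w i * f i) + w i * c0) := fun i => by ring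
  rw [Finset.sum_congr rfl fun i _ => h i, Finset.sum_add_distrib, Finset.sum_add_distrib,
    ← Finset.mul_sum, ← Finset.mul_sum, ← Finset.sum_mul, hw, one_mul]

variable {T : ℕ} {p : S → A → S → ℝ} {π : ℕ → S → A → ℝ} {r : S → A → ℝ}
  {b : ℕ → S → A → ℝ} {μ : ℕ → S → A → ℝ}

lemma Exp_Gest_succ (hp : IsKernel p) (hμ : IsPolicy μ) (n t : ℕ) (s : S) :
    Exp p μ (n + 1) t s (Gest π μ r b (n + 1) t s) =
      (∑ a, μ t s a * (π t s a / μ t s a *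
        ((r s a - b t s a) +
          ∑ s', p s a s' * Exp p μ n (t + 1) s' (Gest π μ r b n (t + 1) s'))))
        + bbar π b t s := by
  have hinner : ∀ (a : A) (s' : S),
      Exp p μ n (t + 1) s' (fun τ => Gest π μ r b (n + 1) t s (a, s', τ))
        = π t s a / μ t s a * Exp p μ n (t + 1) s' (Gest π μ r b n (t + 1) s')
          + (π t s a / μ t s a * (r s a - b t s a) + bbar π b t s) := by
    intro a s'
    have hfn : (fun τ => Gest π μ r b (n + 1) t s (a, s', τ))
        = fun τ => π t s a / μ t s a * Gest π μ r b n (t + 1) s' τ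
            + (π t s a / μ t s a * (r s a - b t s a) + bbar π b t s) := by
      funext τ
      simp only [Gest]
      ring
    rw [hfn, Exp_affine p μ hp hμ]
  show (∑ a, μ t s a * ∑ s', p s a s' *
      Exp p μ n (t + 1) s' (fun τ => Gest π μ r b (n + 1) t s (a, s', τ))) = _
  have houter : ∀ a : A, μ t s a * ∑ s', p s a s' *
      Exp p μ n (t + 1) s' (fun τ => Gest π μ r b (n + 1) t s (a, s', τ))
      = μ t s a * (π t s a / μ t s a *
        ((r s a - b t s a) +
          ∑ s', p s a s' * Exp p μ n (t + 1) s' (Gest π μ r b n (t + 1) s')))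
        + μ t s a * bbar π b t s := by
    intro a
    rw [Finset.sum_congr rfl fun s' _ => by rw [hinner a s'],
      sum_weight_affine (fun s' => p s a s')
        (fun s' => Exp p μ n (t + 1) s' (Gest π μ r b n (t + 1) s')) (hp s a).2]
    ring
  rw [Finset.sum_congr rfl fun a _ => houter a, Finset.sum_add_distrib,
    ← Finset.sum_mul, (hμ t s).2, one_mul]

lemma Exp_Gest_sq_succ (hp : IsKernel p) (hμ : IsPolicy μ) (n t : ℕ) (s : S) :
    Exp p μ (n + 1) t s (fun τ => Gest π μ r b (n + 1) t s τ ^ 2) =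
      (∑ a, μ t s a * ((π t s a / μ t s a) ^ 2 *
          ((r s a - b t s a) ^ 2
            + 2 * (r s a - b t s a) *
                (∑ s', p s a s' * Exp p μ n (t + 1) s' (Gest π μ r b n (t + 1) s'))
            + ∑ s', p s a s' *
                Exp p μ n (t + 1) s' (fun τ => Gest π μ r b n (t + 1) s' τ ^ 2))
        + 2 * bbar π b t s * (π t s a / μ t s a) *
            ((r s a - b t s a) +
              ∑ s', p s a s' * Exp p μ n (t + 1) s' (Gest π μ r b n (t + 1) s'))))
        + bbar π b t s ^ 2 := by
  have hinner : ∀ (a : A) (s' : S),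
      Exp p μ n (t + 1) s' (fun τ => Gest π μ r b (n + 1) t s (a, s', τ) ^ 2)
        = (π t s a / μ t s a) ^ 2 *
            Exp p μ n (t + 1) s' (fun τ => Gest π μ r b n (t + 1) s' τ ^ 2)
          + ((2 * (π t s a / μ t s a) ^ 2 * (r s a - b t s a)
              + 2 * (π t s a / μ t s a) * bbar π b t s) *
              Exp p μ n (t + 1) s' (Gest π μ r b n (t + 1) s')
            + (π t s a / μ t s a * (r s a - b t s a) + bbar π b t s) ^ 2) := by
    intro a s'
    have hfn : (fun τ => Gest π μ r b (n + 1) t s (a, s', τ) ^ 2)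
        = fun τ => (π t s a / μ t s a) ^ 2 * Gest π μ r b n (t + 1) s' τ ^ 2
            + ((2 * (π t s a / μ t s a) ^ 2 * (r s a - b t s a)
                + 2 * (π t s a / μ t s a) * bbar π b t s) * Gest π μ r b n (t + 1) s' τ
              + (π t s a / μ t s a * (r s a - b t s a) + bbar π b t s) ^ 2) := by
      funext τ
      simp only [Gest]
      ring
    rw [hfn, Exp_quad p μ hp hμ]
  show (∑ a, μ t s a * ∑ s', p s a s' *
      Exp p μ n (t + 1) s' (fun τ => Gest π μ r b (n + 1) t s (a, s', τ) ^ 2)) = _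
  have houter : ∀ a : A, μ t s a * ∑ s', p s a s' *
      Exp p μ n (t + 1) s' (fun τ => Gest π μ r b (n + 1) t s (a, s', τ) ^ 2)
      = μ t s a * ((π t s a / μ t s a) ^ 2 *
          ((r s a - b t s a) ^ 2
            + 2 * (r s a - b t s a) *
                (∑ s', p s a s' * Exp p μ n (t + 1) s' (Gest π μ r b n (t + 1) s'))
            + ∑ s', p s a s' *
                Exp p μ n (t + 1) s' (fun τ => Gest π μ r b n (t + 1) s' τ ^ 2))
        + 2 * bbar π b t s * (π t s a / μ t s a) *
            ((r s a - b t s a) +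
              ∑ s', p s a s' * Exp p μ n (t + 1) s' (Gest π μ r b n (t + 1) s')))
        + μ t s a * bbar π b t s ^ 2 := by
    intro a
    rw [Finset.sum_congr rfl fun s' _ => by rw [hinner a s'],
      sum_weight_quad (fun s' => p s a s')
        (fun s' => Exp p μ n (t + 1) s' (Gest π μ r b n (t + 1) s'))
        (fun s' => Exp p μ n (t + 1) s' (fun τ => Gest π μ r b n (t + 1) s' τ ^ 2))
        (hp s a).2]
    ring
  rw [Finset.sum_congr rfl fun a _ => houter a, Finset.sum_add_distrib,
    ← Finset.sum_mul, (hμ t s).2, one_mul]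

end StepLemmas
section Moments

variable {S A : Type} [Fintype S] [Fintype A]
variable {T : ℕ} {p : S → A → S → ℝ} {π : ℕ → S → A → ℝ} {r : S → A → ℝ}
  {b : ℕ → S → A → ℝ} {μ : ℕ → S → A → ℝ}

lemma moments_base (hμ : IsPolicy μ) {t : ℕ} (s : S) (ht : t + 1 = T)
    (hΛ : ∀ a, μ t s a = 0 → π t s a * (r s a - b t s a) = 0) :
    Exp p μ 0 t s (Gest π μ r b 0 t s) = vf T p π r t s ∧
    Var p μ 0 t s (Gest π μ r b 0 t s) =
      (∑ a, μ t s a * ((π t s a / μ t s a) ^ 2 * (qf T p π r t s a - b t s a) ^ 2))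
        - (vf T p π r t s - bbar π b t s) ^ 2 := by
  have hmid : ∑ a, μ t s a * (π t s a / μ t s a * (r s a - b t s a))
      = vf T p π r t s - bbar π b t s := by
    rw [sum_rho_eq _ _ _ hΛ, vf_sub_bbar]
    exact Finset.sum_congr rfl fun a _ => by rw [qf_last ht]
  have hE : Exp p μ 0 t s (Gest π μ r b 0 t s) = vf T p π r t s := by
    show (∑ a, μ t s a * (π t s a / μ t s a * (r s a - b t s a) + bbar π b t s))
      = vf T p π r t s
    have h : ∀ a, μ t s a * (π t s a / μ t s a * (r s a - b t s a) + bbar π b t s)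
        = μ t s a * (π t s a / μ t s a * (r s a - b t s a)) + μ t s a * bbar π b t s :=
      fun a => by ring
    rw [Finset.sum_congr rfl fun a _ => h a, Finset.sum_add_distrib, ← Finset.sum_mul,
      (hμ t s).2, one_mul, hmid]
    ring
  refine ⟨hE, ?_⟩
  have hM2 : Exp p μ 0 t s (fun τ => Gest π μ r b 0 t s τ ^ 2)
      = (∑ a, μ t s a * ((π t s a / μ t s a) ^ 2 * (qf T p π r t s a - b t s a) ^ 2))
        + (2 * bbar π b t s * (vf T p π r t s - bbar π b t s) + bbar π b t s ^ 2) := by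
    show (∑ a, μ t s a * (π t s a / μ t s a * (r s a - b t s a) + bbar π b t s) ^ 2) = _
    have h : ∀ a, μ t s a * (π t s a / μ t s a * (r s a - b t s a) + bbar π b t s) ^ 2
        = μ t s a * ((π t s a / μ t s a) ^ 2 * (qf T p π r t s a - b t s a) ^ 2)
          + ((2 * bbar π b t s) * (μ t s a * (π t s a / μ t s a * (r s a - b t s a)))
            + μ t s a * bbar π b t s ^ 2) := by
      intro a
      rw [qf_last ht]
      ring
    rw [Finset.sum_congr rfl fun a _ => h a, Finset.sum_add_distrib, Finset.sum_add_distrib,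
      ← Finset.mul_sum, ← Finset.sum_mul, (hμ t s).2, one_mul, hmid]
  rw [Var, hM2, hE]
  ring

lemma moments_succ (hp : IsKernel p) (hμ : IsPolicy μ) {n t : ℕ} (s : S)
    (ht : t + n + 2 = T)
    (hE' : ∀ s', Exp p μ n (t + 1) s' (Gest π μ r b n (t + 1) s') = vf T p π r (t + 1) s')
    (hΛ : ∀ a, μ t s a = 0 → π t s a * (qf T p π r t s a - b t s a) = 0) :
    Exp p μ (n + 1) t s (Gest π μ r b (n + 1) t s) = vf T p π r t s ∧
    Var p μ (n + 1) t s (Gest π μ r b (n + 1) t s) =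
      (∑ a, μ t s a * ((π t s a / μ t s a) ^ 2 *
        ((qf T p π r t s a - b t s a) ^ 2 + nuf T p π r t s a +
          ∑ s', p s a s' * Var p μ n (t + 1) s' (Gest π μ r b n (t + 1) s'))))
        - (vf T p π r t s - bbar π b t s) ^ 2 := by
  have hq : ∀ a, r s a - b t s a + ∑ s', p s a s' * vf T p π r (t + 1) s'
      = qf T p π r t s a - b t s a := by
    intro a
    rw [qf_succ ht]
    ring
  have hmid : ∑ a, μ t s a * (π t s a / μ t s a * (qf T p π r t s a - b t s a))
      = vf T p π r t s - bbar π b t s := by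
    rw [sum_rho_eq _ _ _ hΛ, vf_sub_bbar]
  have hE := Exp_Gest_succ (π := π) (r := r) (b := b) hp hμ n t s
  simp only [hE'] at hE
  have hEfin : Exp p μ (n + 1) t s (Gest π μ r b (n + 1) t s) = vf T p π r t s := by
    rw [hE]
    have h : ∀ a, μ t s a * (π t s a / μ t s a *
        (r s a - b t s a + ∑ s', p s a s' * vf T p π r (t + 1) s'))
        = μ t s a * (π t s a / μ t s a * (qf T p π r t s a - b t s a)) := by
      intro a
      rw [hq a]
    rw [Finset.sum_congr rfl fun a _ => h a, hmid]
    ring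
  refine ⟨hEfin, ?_⟩
  have hM2' : ∀ s', Exp p μ n (t + 1) s' (fun τ => Gest π μ r b n (t + 1) s' τ ^ 2)
      = Var p μ n (t + 1) s' (Gest π μ r b n (t + 1) s') + vf T p π r (t + 1) s' ^ 2 := by
    intro s'
    rw [Var, hE' s']
    ring
  have hsq := Exp_Gest_sq_succ (π := π) (r := r) (b := b) hp hμ n t s
  simp only [hE', hM2'] at hsq
  have hsplit : ∀ a, ∑ s', p s a s' *
      (Var p μ n (t + 1) s' (Gest π μ r b n (t + 1) s') + vf T p π r (t + 1) s' ^ 2)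
      = (∑ s', p s a s' * Var p μ n (t + 1) s' (Gest π μ r b n (t + 1) s'))
        + ∑ s', p s a s' * vf T p π r (t + 1) s' ^ 2 := by
    intro a
    rw [Finset.sum_congr rfl fun s' _ => mul_add (p s a s') _ _, Finset.sum_add_distrib]
  simp only [hsplit] at hsq
  have hterm : ∀ a, μ t s a * ((π t s a / μ t s a) ^ 2 *
        ((r s a - b t s a) ^ 2
          + 2 * (r s a - b t s a) * (∑ s', p s a s' * vf T p π r (t + 1) s')
          + ((∑ s', p s a s' * Var p μ n (t + 1) s' (Gest π μ r b n (t + 1) s'))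
            + ∑ s', p s a s' * vf T p π r (t + 1) s' ^ 2))
        + 2 * bbar π b t s * (π t s a / μ t s a) *
            ((r s a - b t s a) + ∑ s', p s a s' * vf T p π r (t + 1) s'))
      = μ t s a * ((π t s a / μ t s a) ^ 2 *
          ((qf T p π r t s a - b t s a) ^ 2 + nuf T p π r t s a +
            ∑ s', p s a s' * Var p μ n (t + 1) s' (Gest π μ r b n (t + 1) s')))
        + (2 * bbar π b t s) *
            (μ t s a * (π t s a / μ t s a * (qf T p π r t s a - b t s a))) := by
    intro a
    rw [nuf_eq ht, ← hq a]
    ring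
  rw [Finset.sum_congr rfl fun a _ => hterm a, Finset.sum_add_distrib,
    ← Finset.mul_sum, hmid] at hsq
  rw [Var, hsq, hEfin]
  ring

end Moments
section MainInduction

variable {S A : Type} [Fintype S] [Fintype A] [Nonempty A]

theorem key_induction (T : ℕ) (p : S → A → S → ℝ) (hp : IsKernel p) (r : S → A → ℝ)
    (π : ℕ → S → A → ℝ) (hπ : IsPolicy π) (b : ℕ → S → A → ℝ) :
    ∀ n t (s : S), t + n + 1 = T →
      (∀ a, (qf T p π r t s a - b t s a) ^ 2 ≤ uf T p π r b t s a) ∧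
      (∀ μ, IsPolicy μ →
        (∀ t' s' a, t ≤ t' → t' < T → μ t' s' a = 0 →
          π t' s' a * uf T p π r b t' s' a = 0) →
        Exp p μ n t s (Gest π μ r b n t s) = vf T p π r t s ∧
        (∑ a, π t s a * Real.sqrt (uf T p π r b t s a)) ^ 2
          - (vf T p π r t s - bbar π b t s) ^ 2 ≤ Var p μ n t s (Gest π μ r b n t s)) ∧
      Var p (mustar T p π r b) n t s (Gest π (mustar T p π r b) r b n t s)
        = (∑ a, π t s a * Real.sqrt (uf T p π r b t s a)) ^ 2
          - (vf T p π r t s - bbar π b t s) ^ 2 := by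
  intro n
  induction n using Nat.strong_induction_on with
  | _ n ih =>
    match n with
    | 0 =>
      intro t s ht
      have hA : ∀ a, (qf T p π r t s a - b t s a) ^ 2 ≤ uf T p π r b t s a :=
        fun a => le_of_eq (uf_last ht s a).symm
      have hu0 : ∀ a, 0 ≤ uf T p π r b t s a :=
        fun a => le_trans (sq_nonneg _) (hA a)
      refine ⟨hA, ?_, ?_⟩
      · intro μ hμpol hμΛ
        have hΛb : ∀ a, μ t s a = 0 → π t s a * (r s a - b t s a) = 0 := by
          intro a h0
          have h2 := lam_qb (hA a) (hμΛ t s a le_rfl (by omega) h0)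
          rwa [qf_last ht] at h2
        obtain ⟨hE, hV⟩ := moments_base hμpol s ht hΛb
        refine ⟨hE, ?_⟩
        rw [hV]
        have hrw : ∑ a, μ t s a * ((π t s a / μ t s a) ^ 2 * (qf T p π r t s a - b t s a) ^ 2)
            = ∑ a, μ t s a * ((π t s a / μ t s a) ^ 2 * uf T p π r b t s a) :=
          Finset.sum_congr rfl fun a _ => by rw [uf_last ht]
        have hcs := cs_is (μ t s) (π t s) (uf T p π r b t s) (hμpol t s).1 (hμpol t s).2
          hu0 (fun a h0 => lam_sqrt (hu0 a) (hμΛ t s a le_rfl (by omega) h0))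
        rw [hrw]
        linarith
      · have hmuΛb : ∀ a, mustar T p π r b t s a = 0 →
            π t s a * (r s a - b t s a) = 0 := by
          intro a h0
          have h2 := lam_qb (hA a) (mustar_lambda (hu0 a) h0)
          rwa [qf_last ht] at h2
        obtain ⟨hE, hV⟩ := moments_base (mustar_policy hπ) s ht hmuΛb
        rw [hV]
        have hrw : ∑ a, mustar T p π r b t s a *
              ((π t s a / mustar T p π r b t s a) ^ 2 * (qf T p π r t s a - b t s a) ^ 2)
            = ∑ a, mustar T p π r b t s a *
              ((π t s a / mustar T p π r b t s a) ^ 2 * uf T p π r b t s a) :=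
          Finset.sum_congr rfl fun a _ => by rw [uf_last ht]
        rw [hrw]
        have := normPol_weight_sum (π t s) (uf T p π r b t s) (hπ t s).1 hu0
        rw [show (∑ a, mustar T p π r b t s a *
              ((π t s a / mustar T p π r b t s a) ^ 2 * uf T p π r b t s a))
            = ∑ a, normPol (fun a' => π t s a' * Real.sqrt (uf T p π r b t s a')) a *
              ((π t s a / normPol (fun a' => π t s a' * Real.sqrt (uf T p π r b t s a')) a) ^ 2
                * uf T p π r b t s a) from rfl, this]
    | m + 1 =>
      intro t s ht
      have ihm := ih m (Nat.lt_succ_self m)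
      have hVstar : ∀ s' : S,
          Var p (mustar T p π r b) m (t + 1) s'
            (Gest π (mustar T p π r b) r b m (t + 1) s')
          = (∑ a, π (t + 1) s' a * Real.sqrt (uf T p π r b (t + 1) s' a)) ^ 2
            - (vf T p π r (t + 1) s' - bbar π b (t + 1) s') ^ 2 :=
        fun s' => (ihm (t + 1) s' (by omega)).2.2
      have hVstar_nonneg : ∀ s' : S, 0 ≤ Var p (mustar T p π r b) m (t + 1) s'
          (Gest π (mustar T p π r b) r b m (t + 1) s') := by
        intro s'
        rw [hVstar s']
        have := vb_sq_le_Z_sq (b := b) s' hπ (fun a' => (ihm (t + 1) s' (by omega)).1 a')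
        linarith
      have hA : ∀ a, (qf T p π r t s a - b t s a) ^ 2 ≤ uf T p π r b t s a := by
        intro a
        rw [uf_succ ht s a]
        have h1 : 0 ≤ nuf T p π r t s a := nuf_nonneg hp t s a
        have h3 : 0 ≤ ∑ s', p s a s' * Var p (mustar T p π r b) m (t + 1) s'
            (Gest π (mustar T p π r b) r b m (t + 1) s') :=
          Finset.sum_nonneg fun s' _ => mul_nonneg ((hp s a).1 s') (hVstar_nonneg s')
        linarith
      have hu0 : ∀ a, 0 ≤ uf T p π r b t s a :=
        fun a => le_trans (sq_nonneg _) (hA a)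
      have hA1 : ∀ t' (s' : S) a, t + 1 ≤ t' → t' < T → 0 ≤ uf T p π r b t' s' a := by
        intro t' s' a h1 h2
        have := (ih (T - 1 - t') (by omega) t' s' (by omega)).1 a
        exact le_trans (sq_nonneg _) this
      have hmuΛ1 : ∀ t' (s' : S) a, t + 1 ≤ t' → t' < T →
          mustar T p π r b t' s' a = 0 → π t' s' a * uf T p π r b t' s' a = 0 :=
        fun t' s' a h1 h2 h0 => mustar_lambda (hA1 t' s' a h1 h2) h0
      have hEstar : ∀ s' : S, Exp p (mustar T p π r b) m (t + 1) s'
          (Gest π (mustar T p π r b) r b m (t + 1) s') = vf T p π r (t + 1) s' :=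
        fun s' => ((ihm (t + 1) s' (by omega)).2.1 (mustar T p π r b) (mustar_policy hπ)
          (fun t' s₁ a h1 h2 => hmuΛ1 t' s₁ a h1 h2)).1
      refine ⟨hA, ?_, ?_⟩
      · intro μ hμpol hμΛ
        have hE' : ∀ s' : S, Exp p μ m (t + 1) s' (Gest π μ r b m (t + 1) s')
            = vf T p π r (t + 1) s' :=
          fun s' => ((ihm (t + 1) s' (by omega)).2.1 μ hμpol
            (fun t' s₁ a h1 h2 => hμΛ t' s₁ a (by omega) h2)).1
        have hΛt : ∀ a, μ t s a = 0 → π t s a * (qf T p π r t s a - b t s a) = 0 :=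
          fun a h0 => lam_qb (hA a) (hμΛ t s a le_rfl (by omega) h0)
        obtain ⟨hE, hV⟩ := moments_succ hp hμpol s ht hE' hΛt
        refine ⟨hE, ?_⟩
        rw [hV]
        have hvle : ∀ s' : S, Var p (mustar T p π r b) m (t + 1) s'
              (Gest π (mustar T p π r b) r b m (t + 1) s')
            ≤ Var p μ m (t + 1) s' (Gest π μ r b m (t + 1) s') := by
          intro s'
          rw [hVstar s']
          exact ((ihm (t + 1) s' (by omega)).2.1 μ hμpol
            (fun t' s₁ a h1 h2 => hμΛ t' s₁ a (by omega) h2)).2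
        have hWle : ∀ a, uf T p π r b t s a
            ≤ (qf T p π r t s a - b t s a) ^ 2 + nuf T p π r t s a +
              ∑ s', p s a s' * Var p μ m (t + 1) s' (Gest π μ r b m (t + 1) s') := by
          intro a
          rw [uf_succ ht s a]
          have : ∑ s', p s a s' * Var p (mustar T p π r b) m (t + 1) s'
                (Gest π (mustar T p π r b) r b m (t + 1) s')
              ≤ ∑ s', p s a s' * Var p μ m (t + 1) s' (Gest π μ r b m (t + 1) s') :=
            Finset.sum_le_sum fun s' _ =>
              mul_le_mul_of_nonneg_left (hvle s') ((hp s a).1 s')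
          linarith
        have h1 : ∑ a, μ t s a * ((π t s a / μ t s a) ^ 2 * uf T p π r b t s a)
            ≤ ∑ a, μ t s a * ((π t s a / μ t s a) ^ 2 *
              ((qf T p π r t s a - b t s a) ^ 2 + nuf T p π r t s a +
                ∑ s', p s a s' * Var p μ m (t + 1) s' (Gest π μ r b m (t + 1) s'))) :=
          Finset.sum_le_sum fun a _ =>
            mul_le_mul_of_nonneg_left
              (mul_le_mul_of_nonneg_left (hWle a) (sq_nonneg _)) ((hμpol t s).1 a)
        have hcs := cs_is (μ t s) (π t s) (uf T p π r b t s) (hμpol t s).1 (hμpol t s).2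
          hu0 (fun a h0 => lam_sqrt (hu0 a) (hμΛ t s a le_rfl (by omega) h0))
        linarith
      · have hmuΛt : ∀ a, mustar T p π r b t s a = 0 →
            π t s a * (qf T p π r t s a - b t s a) = 0 :=
          fun a h0 => lam_qb (hA a) (mustar_lambda (hu0 a) h0)
        obtain ⟨hE, hV⟩ := moments_succ hp (mustar_policy hπ) s ht hEstar hmuΛt
        rw [hV]
        have hrw : ∀ a, (qf T p π r t s a - b t s a) ^ 2 + nuf T p π r t s a +
              ∑ s', p s a s' * Var p (mustar T p π r b) m (t + 1) s'
                (Gest π (mustar T p π r b) r b m (t + 1) s')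
            = uf T p π r b t s a := fun a => (uf_succ ht s a).symm
        rw [Finset.sum_congr rfl fun a _ => by rw [hrw a]]
        have := normPol_weight_sum (π t s) (uf T p π r b t s) (hπ t s).1 hu0
        rw [show (∑ a, mustar T p π r b t s a *
              ((π t s a / mustar T p π r b t s a) ^ 2 * uf T p π r b t s a))
            = ∑ a, normPol (fun a' => π t s a' * Real.sqrt (uf T p π r b t s a')) a *
              ((π t s a / normPol (fun a' => π t s a' * Real.sqrt (uf T p π r b t s a')) a) ^ 2
                * uf T p π r b t s a) from rfl, this]

end MainInduction

/-- Optimal behavior policy: for every baseline `b`, the behavior policy `μ*`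
lies in `Λ`; for every time `t`, state `s` and `μ ∈ Λ`, the conditional variance of `G^b`
under `μ*` is at most that under `μ`; and the variance under `μ*` equals
`(Σ_a π_t(a|s)√(u_{π,t}(s,a)))² − (v_{π,t}(s) − b̄_t(s))²`. -/
theorem optimal_behavior_policy {S A : Type} [Fintype S] [Fintype A] [Nonempty A]
    (T : ℕ) (hT : 1 ≤ T)
    (p : S → A → S → ℝ) (hp : IsKernel p)
    (r : S → A → ℝ)
    (π : ℕ → S → A → ℝ) (hπ : IsPolicy π)
    (b : ℕ → S → A → ℝ) :
    inLambda T p π r b (mustar T p π r b) ∧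
    (∀ (t : ℕ) (s : S), t < T → ∀ μ : ℕ → S → A → ℝ, IsPolicy μ → inLambda T p π r b μ →
      VarG T p π (mustar T p π r b) r b t s ≤ VarG T p π μ r b t s) ∧
    (∀ (t : ℕ) (s : S), t < T →
      VarG T p π (mustar T p π r b) r b t s =
        (∑ a, π t s a * Real.sqrt (uf T p π r b t s a)) ^ 2 -
          (vf T p π r t s - bbar π b t s) ^ 2) := by
  refine ⟨?_, ?_, ?_⟩
  · intro t s a htT h0
    have hA := (key_induction T p hp r π hπ b (T - 1 - t) t s (by omega)).1 a
    exact mustar_lambda (le_trans (sq_nonneg _) hA) h0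
  · intro t s htT μ hμpol hμΛ
    have hk := key_induction T p hp r π hπ b (T - 1 - t) t s (by omega)
    have h1 := (hk.2.1 μ hμpol (fun t' s' a _ h2 h0 => hμΛ t' s' a h2 h0)).2
    have h2 := hk.2.2
    show Var p (mustar T p π r b) (T - 1 - t) t s
        (Gest π (mustar T p π r b) r b (T - 1 - t) t s)
      ≤ Var p μ (T - 1 - t) t s (Gest π μ r b (T - 1 - t) t s)
    rw [h2]
    exact h1
  · intro t s htT
    exact (key_induction T p hp r π hπ b (T - 1 - t) t s (by omega)).2.2

end DOpt
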